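/- Let H be a Hilbert space, (P_n) an increasing sequence of finite rank orthogonal projections converging strongly to 1, and T a bounded operator with (1 − P_n) T P_n = 0 for all n (T is triangular with respect to the nest). Then dist(T, K(H)) ≥ inf{‖T − K‖ : K ∈ K(H), (1 − P_n) K P_n = 0 for all n}; i.e., the distance of T to the compacts equals its distance to the compact operators inside the nest algebra. -/

import Mathlib

open Filter Topology

/-- A finite rank orthogonal projection on a Hilbert space. -/
def IsFinRankProj {H : Type*} [NormedAddCommGroup H] [InnerProductSpace ℂ H]
    [CompleteSpace H] (P : H →L[ℂ] H) : Prop :=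
  IsSelfAdjoint P ∧ P ∘L P = P ∧ FiniteDimensional ℂ (LinearMap.range (P : H →ₗ[ℂ] H))

/-!
Let `K` be compact. Since `1 - P n → 0` strongly and `‖1 - P n‖ ≤ 1`, Ascoli's theorem gives
`‖(1 - P n) K‖ → 0`. As `T` leaves every `ran P n` invariant,
`(1 - P n) T = (1 - P n) (T - K) (1 - P n) + (1 - P n) K (1 - P n)`, so the finite rank operator
`P n T`, which is again triangular, satisfies `‖T - P n T‖ ≤ ‖T - K‖ + ‖(1 - P n) K‖`.
-/

section Nest

variable {R : Type*} [Ring R] {p : ℕ → R}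

theorem mul_eq_right_of_le_of_succ (hidem : ∀ n, IsIdempotentElem (p n))
    (hsucc : ∀ n, p (n + 1) * p n = p n) {m n : ℕ} (hmn : m ≤ n) : p n * p m = p m := by
  induction n, hmn using Nat.le_induction with
  | base => exact hidem m
  | succ n _ ih => rw [← ih, ← mul_assoc, hsucc]

theorem one_sub_mul_mul_mul_eq_zero (hle : ∀ {m n : ℕ}, m ≤ n → p n * p m = p m) {t : R}
    (ht : ∀ n, (1 - p n) * (t * p n) = 0) (n m : ℕ) :
    (1 - p m) * (p n * t * p m) = 0 := by
  rcases le_total m n with hmn | hnm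
  · have htm : t * p m = p m * (t * p m) := by
      rw [← sub_eq_zero, ← one_sub_mul, ht m]
    rw [mul_assoc, htm, ← mul_assoc (p n), hle hmn, ← htm, ht m]
  · rw [← mul_assoc, ← mul_assoc, sub_mul, one_mul, hle hnm, sub_self, zero_mul, zero_mul]

end Nest

theorem norm_one_sub_mul_le {R : Type*} [NormedRing R] {p t : R} (hp : ‖1 - p‖ ≤ 1)
    (ht : (1 - p) * (t * p) = 0) (k : R) : ‖(1 - p) * t‖ ≤ ‖t - k‖ + ‖(1 - p) * k‖ := by
  set q := 1 - p
  have hsplit : q * t = q * (t - k) * q + q * k * q := by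
    have : q * t = q * t * q := by
      rw [← sub_eq_zero, ← mul_one_sub, sub_sub_cancel, mul_assoc, ht]
    rw [this]; noncomm_ring
  calc ‖q * t‖ ≤ ‖q‖ * ‖t - k‖ * ‖q‖ + ‖q * k‖ * ‖q‖ := by
        rw [hsplit]
        exact (norm_add_le _ _).trans (add_le_add
          ((norm_mul_le _ _).trans (by gcongr; exact norm_mul_le _ _)) (norm_mul_le _ _))
    _ ≤ 1 * ‖t - k‖ * 1 + ‖q * k‖ * 1 := by gcongr
    _ = ‖t - k‖ + ‖q * k‖ := by ring

section CompactOperator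

variable {𝕜 E F G : Type*} [RCLike 𝕜] [NormedAddCommGroup E] [NormedSpace 𝕜 E]
  [NormedAddCommGroup F] [NormedSpace 𝕜 F] [NormedAddCommGroup G] [NormedSpace 𝕜 G]

theorem isCompactOperator_of_finiteDimensional_range (f : E →L[𝕜] F)
    [FiniteDimensional 𝕜 (LinearMap.range (f : E →ₗ[𝕜] F))] : IsCompactOperator f :=
  (isCompactOperator_of_locallyCompactSpace_dom (f.codRestrict _ f.mem_range_self)).continuous_comp
    continuous_subtype_val

-- Ascoli: a bounded family converging pointwise converges uniformly on the compact closure of `K`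
-- applied to the unit ball.
theorem IsCompactOperator.tendsto_comp_nhds_zero {ι : Type*} {l : Filter ι}
    {A : ι → F →L[𝕜] G} {C : ℝ} (hA : ∀ i, ‖A i‖ ≤ C)
    (hlim : ∀ y, Tendsto (fun i => A i y) l (𝓝 0)) {K : E →L[𝕜] F}
    (hK : IsCompactOperator K) : Tendsto (fun i => A i ∘L K) l (𝓝 0) := by
  set S := closure (K '' Metric.closedBall 0 1)
  have hequi : Equicontinuous fun i => ⇑(A i) :=
    ((NormedSpace.equicontinuous_TFAE A).out 5 1 :).mp ⟨C, hA⟩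
  have hunif : TendstoUniformlyOn (fun i => ⇑(A i)) 0 l S := by
    have := (EquicontinuousOn.tendsto_uniformOnFun_iff_pi' (𝔖 := {S})
      (by simpa using hK.isCompact_closure_image_closedBall 1)
      (fun _ _ => hequi.equicontinuousOn _) l 0).2 (tendsto_pi_nhds.2 fun y => hlim y)
    exact (UniformOnFun.tendsto_iff_tendstoUniformlyOn.1 this) S rfl
  rw [NormedAddGroup.tendsto_nhds_zero]
  intro ε hε
  filter_upwards [Metric.tendstoUniformlyOn_iff.1 hunif (ε / 2) (half_pos hε)] with i hi
  refine lt_of_le_of_lt (ContinuousLinearMap.opNorm_le_of_unit_norm (half_pos hε).le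
    fun x hx => ?_) (half_lt_self hε)
  simpa [dist_eq_norm] using (hi (K x) (subset_closure ⟨x, by simp [hx], rfl⟩)).le

end CompactOperator

theorem stmt6 {H : Type*} [NormedAddCommGroup H] [InnerProductSpace ℂ H] [CompleteSpace H]
    (P : ℕ → H →L[ℂ] H) (hproj : ∀ n, IsFinRankProj (P n))
    (hmono : ∀ n, P (n + 1) ∘L P n = P n)
    (hsot : ∀ x : H, Tendsto (fun n => P n x) atTop (𝓝 x))
    (T : H →L[ℂ] H) (hT : ∀ n, (1 - P n) ∘L T ∘L P n = 0) :
    Metric.infDist T {K : H →L[ℂ] H | IsCompactOperator ⇑K} =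
      Metric.infDist T
        {K : H →L[ℂ] H | IsCompactOperator ⇑K ∧ ∀ n, (1 - P n) ∘L K ∘L P n = 0} := by
  have hnorm (n : ℕ) : ‖1 - P n‖ ≤ 1 :=
    IsStarProjection.norm_le _ (IsStarProjection.mk (hproj n).2.1 (hproj n).1).one_sub
  have hmem (n : ℕ) :
      IsCompactOperator ⇑(P n * T) ∧ ∀ m, (1 - P m) ∘L (P n * T) ∘L P m = 0 := by
    have := (hproj n).2.2
    exact ⟨(isCompactOperator_of_finiteDimensional_range (P n)).comp_clm T,
      one_sub_mul_mul_mul_eq_zero (mul_eq_right_of_le_of_succ (fun k => (hproj k).2.1) hmono) hT n⟩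
  refine le_antisymm (Metric.infDist_le_infDist_of_subset (fun K hK => hK.1) ⟨_, hmem 0⟩) ?_
  refine (Metric.le_infDist ⟨0, isCompactOperator_zero⟩).2 fun K hK => ?_
  have hlim : Tendsto (fun n => (1 - P n) ∘L K) atTop (𝓝 0) :=
    hK.tendsto_comp_nhds_zero hnorm fun y => by
      simpa using (tendsto_const_nhds (x := y)).sub (hsot y)
  have hbound : Tendsto (fun n => dist T K + ‖(1 - P n) ∘L K‖) atTop (𝓝 (dist T K)) := by
    simpa using tendsto_const_nhds.add hlim.norm
  refine ge_of_tendsto' hbound fun n => ?_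
  calc Metric.infDist T _ ≤ dist T (P n * T) := Metric.infDist_le_dist_of_mem (hmem n)
    _ = ‖(1 - P n) * T‖ := by rw [dist_eq_norm, sub_mul, one_mul]
    _ ≤ dist T K + ‖(1 - P n) ∘L K‖ := dist_eq_norm T K ▸ norm_one_sub_mul_le (hnorm n) (hT n) K
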